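/- The number of multiset derangements of the multiset 1^{a_1} ... n^{a_n} equals (-1)^{a_1+...+a_n} ∫_0^∞ e^{-x} L_{a_1}(x) · ... · L_{a_n}(x) dx (Even–Gillis theorem). -/

import Mathlib

/-- The number of multiset derangements of the word `w₀ : Fin m → Fin n`:
rearrangements of `w₀` (same number of occurrences of every symbol) that
differ from `w₀` in every position. -/
def multisetDerangementCount {m n : ℕ} (w₀ : Fin m → Fin n) : ℕ :=
  Fintype.card {f : Fin m → Fin n //
    (∀ j, (Finset.univ.filter fun i => f i = j).card =
          (Finset.univ.filter fun i => w₀ i = j).card) ∧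
    ∀ i, f i ≠ w₀ i}

/-- The simple Laguerre polynomial `L_a(x) = ∑_{α=0}^{a} (-1)^α C(a,α) x^α / α!`. -/
noncomputable def laguerre (a : ℕ) (x : ℝ) : ℝ :=
  ∑ α ∈ Finset.range (a + 1), (-1 : ℝ) ^ α * (Nat.choose a α : ℝ) * x ^ α / (Nat.factorial α : ℝ)

/-!
Inclusion–exclusion over the set `T` of positions at which a rearrangement agrees with `w₀`.
The rearrangements agreeing with `w₀` on `T` are the rearrangements of the word left on the
complement, so there are `(m - |T|)! / ∏ⱼ (aⱼ - tⱼ)!` of them, where `tⱼ` is the number of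
positions of `T` carrying the letter `j`. Writing `(m - |T|)! = ∫₀^∞ e^{-x} x^{m - |T|} dx`, the
alternating sum over `T` becomes the integral of `e^{-x}` against a sum that factors over the
letters, and the factor of the letter `j` is
`∑ₜ C(aⱼ, t) (-1)^t x^{aⱼ - t} / (aⱼ - t)! = (-1)^{aⱼ} L_{aⱼ}(x)`.
-/

open Finset MeasureTheory
open scoped Nat

lemma integrableOn_exp_neg_mul_pow (k : ℕ) :
    IntegrableOn (fun x : ℝ => Real.exp (-x) * x ^ k) (Set.Ioi 0) := by
  refine (Real.GammaIntegral_convergent (s := k + 1) (by positivity)).congr_fun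
    (fun x _ => ?_) measurableSet_Ioi
  simp only [add_sub_cancel_right, Real.rpow_natCast]

lemma integral_exp_neg_mul_pow (k : ℕ) :
    ∫ x in Set.Ioi (0 : ℝ), Real.exp (-x) * x ^ k = k ! := by
  rw [← Real.Gamma_nat_eq_factorial, Real.Gamma_eq_integral (by positivity)]
  refine setIntegral_congr_fun measurableSet_Ioi (fun x _ => ?_)
  simp only [add_sub_cancel_right, Real.rpow_natCast]

lemma sum_range_choose_mul_eq_neg_one_pow_mul_laguerre (a : ℕ) (x : ℝ) :
    ∑ k ∈ range (a + 1), (a.choose k : ℝ) * ((-1) ^ k * x ^ (a - k) / (a - k)!) =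
      (-1) ^ a * laguerre a x := by
  rw [laguerre, ← sum_range_reflect, mul_sum]
  refine sum_congr rfl fun k hk => ?_
  have hk : k ≤ a := Nat.lt_succ_iff.1 (mem_range.1 hk)
  have hsign : (-1 : ℝ) ^ a = (-1) ^ (a - k) * (-1) ^ k := by
    rw [← pow_add, Nat.sub_add_cancel hk]
  have hsq : (-1 : ℝ) ^ k * (-1) ^ k = 1 := by rw [← mul_pow]; norm_num
  rw [add_tsub_cancel_right, Nat.sub_sub_self hk, Nat.choose_symm hk, hsign]
  linear_combination (-(a.choose k : ℝ) * (-1) ^ (a - k) * x ^ k / k !) * hsq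

theorem card_filter_forall_ne_eq_sum_powerset {α β : Type*} [Fintype α] [DecidableEq α]
    [Fintype β] [DecidableEq β] (s : Finset (α → β)) (g : α → β) :
    (#{f ∈ s | ∀ i, f i ≠ g i} : ℤ) =
      ∑ T ∈ (univ : Finset α).powerset, (-1 : ℤ) ^ #T * #{f ∈ s | ∀ i ∈ T, f i = g i} := by
  have hinf (T : Finset α) (p : α → (α → β) → Prop) [∀ i, DecidablePred (p i)] :
      (T.inf fun i => ({f | p i f} : Finset (α → β))) ∩ s = {f ∈ s | ∀ i ∈ T, p i f} := by
    ext f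
    simp [mem_inf, and_comm]
  simpa [sum_ite_mem, hinf] using inclusion_exclusion_sum_inf_compl (G := ℤ) univ
    (fun i => ({f | f i = g i} : Finset (α → β))) (fun f => if f ∈ s then 1 else 0)

section

variable {α ι : Type*}

lemma card_filter_univ_coe (S : Finset α) (p : α → Prop) [DecidablePred p] :
    #{x : S | p x} = #{i ∈ S | p i} := by
  rw [← card_map (Function.Embedding.subtype _)]
  congr 1
  ext
  simp [and_comm]

variable [Fintype α] [DecidableEq α]

lemma card_filter_add_card_filter_compl (T : Finset α) (p : α → Prop) [DecidablePred p] :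
    #{i ∈ T | p i} + #{i ∈ Tᶜ | p i} = #{i | p i} := by
  rw [← card_union_of_disjoint (disjoint_filter_filter disjoint_compl_right), ← filter_union,
    union_compl]

variable [Fintype ι] [DecidableEq ι]

def rearrangements (g : α → ι) : Finset (α → ι) :=
  {f | ∀ j, #{i | f i = j} = #{i | g i = j}}

def multisetDerangements (g : α → ι) : Finset (α → ι) :=
  {f ∈ rearrangements g | ∀ i, f i ≠ g i}

lemma comp_perm_mem_rearrangements (g : α → ι) (σ : Equiv.Perm α) : g ∘ σ ∈ rearrangements g := by
  simp only [rearrangements, mem_filter, mem_univ, true_and]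
  exact fun j => card_equiv σ (by simp)

lemma exists_perm_comp_eq_of_mem_rearrangements {g f : α → ι} (hf : f ∈ rearrangements g) :
    ∃ σ : Equiv.Perm α, g ∘ σ = f := by
  simp only [rearrangements, mem_filter, mem_univ, true_and] at hf
  have e : ∀ j, {i // f i = j} ≃ {i // g i = j} := fun j =>
    Fintype.equivOfCardEq (by simpa only [Fintype.card_subtype] using hf j)
  refine ⟨(Equiv.sigmaFiberEquiv f).symm.trans
    ((Equiv.sigmaCongrRight e).trans (Equiv.sigmaFiberEquiv g)), ?_⟩
  funext i
  exact (e (f i) ⟨i, rfl⟩).2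

-- Orbit–stabiliser: the fibres of `σ ↦ g ∘ σ` are cosets of the stabiliser of `g`.
lemma card_perm_comp_eq_of_mem_rearrangements {g f : α → ι} (hf : f ∈ rearrangements g) :
    #{σ : Equiv.Perm α | g ∘ σ = f} = ∏ j, (#{i | g i = j})! := by
  obtain ⟨τ, rfl⟩ := exists_perm_comp_eq_of_mem_rearrangements hf
  calc #{σ : Equiv.Perm α | g ∘ σ = g ∘ τ}
      = #{σ : Equiv.Perm α | g ∘ σ = g} := card_equiv (Equiv.mulRight τ⁻¹) fun σ => by
        simp only [mem_filter, mem_univ, true_and, Equiv.coe_mulRight, Equiv.Perm.coe_mul,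
          Equiv.Perm.inv_def, ← Function.comp_assoc, Equiv.comp_symm_eq]
    _ = Fintype.card {σ : Equiv.Perm α // g ∘ σ = g} := (Fintype.card_subtype _).symm
    _ = ∏ j, (#{i | g i = j})! := by
      rw [DomMulAct.stabilizer_card]; simp only [Fintype.card_subtype]

lemma card_rearrangements_mul_prod_factorial (g : α → ι) :
    #(rearrangements g) * ∏ j, (#{i | g i = j})! = (Fintype.card α)! := by
  rw [← Fintype.card_perm, ← card_univ,
    card_eq_sum_card_fiberwise fun σ _ => comp_perm_mem_rearrangements g σ,
    sum_congr rfl fun f hf => card_perm_comp_eq_of_mem_rearrangements hf, sum_const, smul_eq_mul]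

lemma mem_rearrangements_iff_restrict {f g : α → ι} {T : Finset α} (hfg : ∀ i ∈ T, f i = g i) :
    f ∈ rearrangements g ↔ (fun x : ↥Tᶜ => f x) ∈ rearrangements fun x : ↥Tᶜ => g x := by
  simp only [rearrangements, mem_filter, mem_univ, true_and]
  refine forall_congr' fun j => ?_
  rw [card_filter_univ_coe Tᶜ (f · = j), card_filter_univ_coe Tᶜ (g · = j)]
  have hT : #{i ∈ T | f i = j} = #{i ∈ T | g i = j} :=
    congrArg card (filter_congr fun i hi => by rw [hfg i hi])
  rw [← card_filter_add_card_filter_compl T (f · = j),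
    ← card_filter_add_card_filter_compl T (g · = j), hT]
  omega

lemma card_filter_rearrangements_eqOn (g : α → ι) (T : Finset α) :
    #{f ∈ rearrangements g | ∀ i ∈ T, f i = g i} = #(rearrangements fun x : ↥Tᶜ => g x) := by
  let extend (h : ↥Tᶜ → ι) (i : α) : ι := if hi : i ∈ T then g i else h ⟨i, mem_compl.2 hi⟩
  have extend_eqOn (h : ↥Tᶜ → ι) : ∀ i ∈ T, extend h i = g i := fun i hi => dif_pos hi
  have restrict_extend (h : ↥Tᶜ → ι) : (fun x : ↥Tᶜ => extend h x) = h := by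
    funext x
    exact dif_neg (mem_compl.1 x.2)
  refine card_nbij' (fun f x => f x) extend (fun f hf => ?_) (fun h hh => ?_) (fun f hf => ?_)
    (fun h _ => ?_)
  · simp only [coe_filter] at hf
    exact (mem_rearrangements_iff_restrict hf.2).1 hf.1
  · simp only [coe_filter]
    refine ⟨(mem_rearrangements_iff_restrict (extend_eqOn h)).2 ?_, extend_eqOn h⟩
    rwa [restrict_extend]
  · simp only [coe_filter] at hf
    funext i
    by_cases hi : i ∈ T
    · simp [extend, hi, hf.2 i hi]
    · simp [extend, hi]
  · exact restrict_extend h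

lemma card_filter_rearrangements_eqOn_mul_prod_factorial (g : α → ι) (T : Finset α) :
    #{f ∈ rearrangements g | ∀ i ∈ T, f i = g i} * ∏ j, (#{i ∈ Tᶜ | g i = j})! = (#Tᶜ)! := by
  rw [card_filter_rearrangements_eqOn, ← Fintype.card_coe (Tᶜ : Finset α),
    ← card_rearrangements_mul_prod_factorial fun x : ↥Tᶜ => g x]
  congr 1
  exact prod_congr rfl fun j _ => by rw [card_filter_univ_coe Tᶜ (g · = j)]

lemma sum_powerset_prod_filter {R : Type*} [CommSemiring R] (g : α → ι)
    (u : ι → Finset α → R) :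
    ∑ T ∈ (univ : Finset α).powerset, ∏ j, u j {i ∈ T | g i = j} =
      ∏ j, ∑ S ∈ ({i | g i = j} : Finset α).powerset, u j S := by
  rw [prod_univ_sum]
  refine sum_nbij' (fun T j => {i ∈ T | g i = j}) (fun p => ({i | i ∈ p (g i)} : Finset α))
    (fun T _ => ?_) (fun p _ => ?_) (fun T _ => ?_) (fun p hp => ?_) (fun _ _ => rfl)
  · simp only [Fintype.mem_piFinset, mem_powerset]
    exact fun j => filter_subset_filter _ (subset_univ T)
  · simp
  · ext i
    simp
  · simp only [Fintype.mem_piFinset, mem_powerset] at hp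
    have hg {i j} (hi : i ∈ p j) : g i = j := (mem_filter.1 (hp j hi)).2
    funext j
    ext i
    simp only [mem_filter, mem_univ, true_and]
    exact ⟨fun ⟨hi, hij⟩ => hij ▸ hi, fun hi => ⟨hg hi ▸ hi, hg hi⟩⟩

lemma prod_neg_one_pow_mul_pow_div_factorial (g : α → ι) (T : Finset α) (x : ℝ) :
    ∏ j, ((-1) ^ #{i ∈ T | g i = j} * x ^ (#{i | g i = j} - #{i ∈ T | g i = j}) /
        (#{i | g i = j} - #{i ∈ T | g i = j})!) =
      (-1) ^ #T / (∏ j, ((#{i ∈ Tᶜ | g i = j})! : ℝ)) * x ^ #Tᶜ := by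
  have hcompl : ∀ j, #{i | g i = j} - #{i ∈ T | g i = j} = #{i ∈ Tᶜ | g i = j} := fun j => by
    rw [← card_filter_add_card_filter_compl T (g · = j), Nat.add_sub_cancel_left]
  simp only [hcompl, prod_div_distrib, prod_mul_distrib, prod_pow_eq_pow_sum]
  rw [← card_eq_sum_card_fiberwise fun i _ => mem_univ (g i),
    ← card_eq_sum_card_fiberwise fun i _ => mem_univ (g i)]
  ring

lemma neg_one_pow_card_mul_prod_laguerre (g : α → ι) (x : ℝ) :
    (-1) ^ Fintype.card α * ∏ j, laguerre #{i | g i = j} x =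
      ∑ T ∈ (univ : Finset α).powerset,
        (-1) ^ #T / (∏ j, ((#{i ∈ Tᶜ | g i = j})! : ℝ)) * x ^ #Tᶜ := by
  set a : ι → ℕ := fun j => #{i | g i = j}
  calc (-1) ^ Fintype.card α * ∏ j, laguerre (a j) x
      = ∏ j, ∑ S ∈ ({i | g i = j} : Finset α).powerset,
          (-1) ^ #S * x ^ (a j - #S) / (a j - #S)! := by
        rw [← card_univ, card_eq_sum_card_fiberwise fun i _ => mem_univ (g i),
          ← prod_pow_eq_pow_sum, ← prod_mul_distrib]
        refine prod_congr rfl fun j _ => ?_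
        rw [sum_powerset_apply_card fun k => (-1) ^ k * x ^ (a j - k) / (a j - k)!,
          ← sum_range_choose_mul_eq_neg_one_pow_mul_laguerre]
        simp [a, nsmul_eq_mul]
    _ = _ := by
        rw [← sum_powerset_prod_filter]
        exact sum_congr rfl fun T _ => prod_neg_one_pow_mul_pow_div_factorial g T x

theorem card_multisetDerangements_eq_integral_laguerre (g : α → ι) :
    (#(multisetDerangements g) : ℝ) =
      (-1) ^ Fintype.card α * ∫ x in Set.Ioi 0, Real.exp (-x) * ∏ j, laguerre #{i | g i = j} x := by
  calc (#(multisetDerangements g) : ℝ)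
      = ∑ T ∈ (univ : Finset α).powerset,
          (-1 : ℝ) ^ #T * #{f ∈ rearrangements g | ∀ i ∈ T, f i = g i} := by
        exact_mod_cast card_filter_forall_ne_eq_sum_powerset (rearrangements g) g
    _ = ∑ T ∈ (univ : Finset α).powerset, ∫ x in Set.Ioi 0,
          (-1) ^ #T / (∏ j, ((#{i ∈ Tᶜ | g i = j})! : ℝ)) * (Real.exp (-x) * x ^ #Tᶜ) := by
        refine sum_congr rfl fun T _ => ?_
        rw [integral_const_mul, integral_exp_neg_mul_pow,
          ← card_filter_rearrangements_eqOn_mul_prod_factorial g T, Nat.cast_mul, Nat.cast_prod]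
        field_simp
    _ = ∫ x in Set.Ioi 0, Real.exp (-x) *
          ((-1) ^ Fintype.card α * ∏ j, laguerre #{i | g i = j} x) := by
        rw [← integral_finsetSum _ fun T _ => (integrableOn_exp_neg_mul_pow _).const_mul _]
        refine setIntegral_congr_fun measurableSet_Ioi fun x _ => ?_
        rw [neg_one_pow_card_mul_prod_laguerre, mul_sum]
        exact sum_congr rfl fun T _ => by ring
    _ = _ := by
        simp_rw [mul_left_comm (Real.exp _)]
        exact integral_const_mul _ _

end

theorem even_gillis_general (n : ℕ) (a : Fin n → ℕ) (w₀ : Fin (∑ j, a j) → Fin n)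
    (hcount : ∀ j, (Finset.univ.filter fun i => w₀ i = j).card = a j) :
    (multisetDerangementCount w₀ : ℝ) =
      (-1 : ℝ) ^ (∑ j, a j) *
        ∫ x in Set.Ioi (0 : ℝ), Real.exp (-x) * ∏ j, laguerre (a j) x := by
  have hcard : multisetDerangementCount w₀ = #(multisetDerangements w₀) := by
    rw [multisetDerangementCount, Fintype.card_subtype, multisetDerangements, rearrangements,
      filter_filter]
    congr!
  rw [hcard, card_multisetDerangements_eq_integral_laguerre, Fintype.card_fin]
  simp only [hcount]

/-- The Even–Gillis theorem: the number of derangements of the multiset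
`1^{a₁} ⋯ n^{aₙ}` equals
`(-1)^{a₁+⋯+aₙ} ∫₀^∞ e^{-x} L_{a₁}(x) ⋯ L_{aₙ}(x) dx`. -/
theorem even_gillis (n : ℕ) (a : Fin n → ℕ) (w₀ : Fin (∑ j, a j) → Fin n)
    (hmono : Monotone w₀)
    (hcount : ∀ j, (Finset.univ.filter fun i => w₀ i = j).card = a j) :
    (multisetDerangementCount w₀ : ℝ) =
      (-1 : ℝ) ^ (∑ j, a j) *
        ∫ x in Set.Ioi (0 : ℝ), Real.exp (-x) * ∏ j, laguerre (a j) x :=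
  even_gillis_general n a w₀ hcount
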